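/- arXiv:1503.08159 — 2 statements merged into one kernel-verified Lean document; each statement's English description precedes it below -/
import Mathlib

section
/- With C_0 = 1 and C_k = 2·(3k−3)!/(k!·(2k−1)!) for k ≥ 1, the sum Σ_{k≥0} C_k·(4/27)^k converges and equals 4/3. -/
/-- The number of rooted 2-connected planar maps with `k` edges (Tutte's formula),
as a real number: `C 0 = 1` and `C k = 2 (3k-3)! / (k! (2k-1)!)` for `k ≥ 1`. -/
noncomputable def C (k : ℕ) : ℝ :=
  if k = 0 then 1
  else 2 * (Nat.factorial (3 * k - 3) : ℝ) /
    ((Nat.factorial k : ℝ) * (Nat.factorial (2 * k - 1) : ℝ))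

/-!
Let `T(x) = 1 + x T(x)³` be the ternary-tree series, with `[xⁿ] T(x)ʳ = r/(3n+r) · (3n+r choose n)`.
Tutte's numbers satisfy `C (n+1) = 3 [xⁿ] T - [xⁿ] T²`, i.e. `C(x) = 1 + x (3T - T²)`.
At `x = 4/27` the partial sums `S_N` of `T` obey `S_{N+1} ≤ 1 + x S_N³`, and
`1 + (4/27)(3/2)³ = 3/2`, so they stay below `3/2` and `T(4/27)` converges.
Its value is a nonnegative root of `4t³ - 27t + 27 = (2t - 3)²(t + 3)`, hence `3/2`, and
`C(4/27) = 1 + (4/27)(9/2 - 9/4) = 4/3`.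
-/

open Finset
open scoped Nat

/-- `ternaryCoeff r n = r/(3n+r) · (3n+r choose n)` is the coefficient of `xⁿ` in `T(x)ʳ`, where
`T = 1 + x T³` is the generating function of ternary trees; for `r = 0` it is `[n = 0]`. -/
noncomputable def ternaryCoeff : ℕ → ℕ → ℝ
  | 0, n => if n = 0 then 1 else 0
  | r + 1, n => (r + 1) * (3 * n + r)! / (n ! * (2 * n + r + 1)!)

lemma ternaryCoeff_nonneg (r n : ℕ) : 0 ≤ ternaryCoeff r n := by
  cases r <;> simp only [ternaryCoeff] <;> positivity

lemma ternaryCoeff_zero_right (r : ℕ) : ternaryCoeff r 0 = 1 := by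
  cases r with
  | zero => simp [ternaryCoeff]
  | succ r =>
    simp only [ternaryCoeff, mul_zero, zero_add, Nat.factorial_zero, Nat.cast_one, one_mul]
    rw [Nat.factorial_succ]
    push_cast
    field_simp

lemma ternaryCoeff_succ_succ (s m : ℕ) :
    ternaryCoeff (s + 1) (m + 1) = ternaryCoeff s (m + 1) + ternaryCoeff (s + 3) m := by
  rcases s with _ | r
  · simp only [ternaryCoeff, if_neg m.succ_ne_zero]
    rw [show 3 * (m + 1) + 0 = 3 * m + 2 + 1 by ring,
      show 2 * (m + 1) + 0 + 1 = 2 * m + 2 + 1 by ring,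
      Nat.factorial_succ (3 * m + 2), Nat.factorial_succ m]
    push_cast
    field_simp
    ring
  · simp only [ternaryCoeff]
    rw [show 3 * (m + 1) + (r + 1) = 3 * m + r + 3 + 1 by ring,
      show 2 * (m + 1) + (r + 1) + 1 = 2 * m + r + 3 + 1 by ring,
      show 3 * (m + 1) + r = 3 * m + r + 3 by ring,
      show 2 * (m + 1) + r + 1 = 2 * m + r + 3 by ring,
      show 3 * m + (r + 1 + 2) = 3 * m + r + 3 by ring,
      show 2 * m + (r + 1 + 2) + 1 = 2 * m + r + 3 + 1 by ring,
      Nat.factorial_succ (3 * m + r + 3), Nat.factorial_succ (2 * m + r + 3), Nat.factorial_succ m]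
    push_cast
    field_simp
    ring

lemma ternaryCoeff_one_succ (n : ℕ) : ternaryCoeff 1 (n + 1) = ternaryCoeff 3 n := by
  simpa [ternaryCoeff] using ternaryCoeff_succ_succ 0 n

lemma C_succ (n : ℕ) : C (n + 1) = 3 * ternaryCoeff 1 n - ternaryCoeff 2 n := by
  simp only [C, ternaryCoeff, if_neg n.succ_ne_zero]
  rw [show 3 * (n + 1) - 3 = 3 * n by omega, show 2 * (n + 1) - 1 = 2 * n + 1 by omega,
    show 3 * n + 0 = 3 * n by ring, show 2 * n + 0 + 1 = 2 * n + 1 by ring,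
    Nat.factorial_succ (3 * n), Nat.factorial_succ (2 * n + 1), Nat.factorial_succ n]
  push_cast
  field_simp
  ring

lemma sum_antidiagonal_ternaryCoeff (r n s : ℕ) :
    ∑ p ∈ antidiagonal n, ternaryCoeff r p.1 * ternaryCoeff s p.2 = ternaryCoeff (r + s) n := by
  induction n generalizing s with
  | zero => simp [ternaryCoeff_zero_right]
  | succ n ihn =>
    induction s with
    | zero => simp [Nat.sum_antidiagonal_succ', ternaryCoeff]
    | succ s ihs =>
      rw [Nat.sum_antidiagonal_succ'] at ihs ⊢
      simp only [ternaryCoeff_succ_succ, mul_add, sum_add_distrib, ihn, ternaryCoeff_zero_right]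
        at ihs ⊢
      rw [← add_assoc, ihs, ← add_assoc r s 1, ternaryCoeff_succ_succ, add_assoc r s 3]

lemma sum_range_sum_antidiagonal_le_mul {R : Type*} [CommSemiring R] [PartialOrder R]
    [IsOrderedRing R] {f g : ℕ → R} (hf : ∀ i, 0 ≤ f i) (hg : ∀ j, 0 ≤ g j) (N : ℕ) :
    ∑ n ∈ range N, ∑ p ∈ antidiagonal n, f p.1 * g p.2 ≤
      (∑ i ∈ range N, f i) * ∑ j ∈ range N, g j :=
  calc ∑ n ∈ range N, ∑ p ∈ antidiagonal n, f p.1 * g p.2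
      = ∑ i ∈ range N, ∑ j ∈ range (N - i), f i * g j := by
        simpa [Nat.sum_antidiagonal_eq_sum_range_succ_mk] using
          sum_range_diag_flip N fun i j => f i * g j
    _ ≤ ∑ i ∈ range N, ∑ j ∈ range N, f i * g j := by
        gcongr with i
        · exact fun j _ _ => mul_nonneg (hf i) (hg j)
        · exact Nat.sub_le N i
    _ = (∑ i ∈ range N, f i) * ∑ j ∈ range N, g j := (sum_mul_sum ..).symm

lemma sum_antidiagonal_ternaryCoeff_mul_pow (r s n : ℕ) (x : ℝ) :
    ∑ p ∈ antidiagonal n, ternaryCoeff r p.1 * x ^ p.1 * (ternaryCoeff s p.2 * x ^ p.2) =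
      ternaryCoeff (r + s) n * x ^ n := by
  rw [← sum_antidiagonal_ternaryCoeff, sum_mul]
  refine sum_congr rfl fun p hp => ?_
  rw [← mem_antidiagonal.mp hp, pow_add]
  ring

noncomputable def ternaryTreeSeries (x : ℝ) : ℝ := ∑' n, ternaryCoeff 1 n * x ^ n

section

variable {x : ℝ}

lemma ternaryCoeff_mul_pow_nonneg (hx : 0 ≤ x) (r n : ℕ) : 0 ≤ ternaryCoeff r n * x ^ n :=
  mul_nonneg (ternaryCoeff_nonneg r n) (pow_nonneg hx n)

lemma sum_range_ternaryCoeff_le_pow (hx : 0 ≤ x) (N r : ℕ) :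
    ∑ n ∈ range N, ternaryCoeff r n * x ^ n ≤ (∑ n ∈ range N, ternaryCoeff 1 n * x ^ n) ^ r := by
  induction r with
  | zero =>
    cases N with
    | zero => simp
    | succ N => simp [sum_range_succ', ternaryCoeff]
  | succ r ih =>
    calc ∑ n ∈ range N, ternaryCoeff (r + 1) n * x ^ n
        = ∑ n ∈ range N, ∑ p ∈ antidiagonal n,
            ternaryCoeff 1 p.1 * x ^ p.1 * (ternaryCoeff r p.2 * x ^ p.2) := by
          simp_rw [sum_antidiagonal_ternaryCoeff_mul_pow, add_comm 1 r]
      _ ≤ (∑ n ∈ range N, ternaryCoeff 1 n * x ^ n) * ∑ n ∈ range N, ternaryCoeff r n * x ^ n :=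
          sum_range_sum_antidiagonal_le_mul (ternaryCoeff_mul_pow_nonneg hx 1)
            (ternaryCoeff_mul_pow_nonneg hx r) N
      _ ≤ (∑ n ∈ range N, ternaryCoeff 1 n * x ^ n) ^ (r + 1) := by
          rw [pow_succ']
          exact mul_le_mul_of_nonneg_left ih
            (sum_nonneg fun n _ => ternaryCoeff_mul_pow_nonneg hx 1 n)

lemma sum_range_ternaryCoeff_one_le (hx : 0 ≤ x) {β : ℝ} (hβ₀ : 0 ≤ β)
    (hβ : 1 + x * β ^ 3 ≤ β) (N : ℕ) : ∑ n ∈ range N, ternaryCoeff 1 n * x ^ n ≤ β := by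
  induction N with
  | zero => simpa using hβ₀
  | succ N ih =>
    calc ∑ n ∈ range (N + 1), ternaryCoeff 1 n * x ^ n
        = 1 + x * ∑ n ∈ range N, ternaryCoeff 3 n * x ^ n := by
          rw [sum_range_succ', ternaryCoeff_zero_right, pow_zero, mul_one, add_comm, mul_sum]
          refine congrArg (1 + ·) (sum_congr rfl fun n _ => ?_)
          rw [ternaryCoeff_one_succ, pow_succ]
          ring
      _ ≤ 1 + x * (∑ n ∈ range N, ternaryCoeff 1 n * x ^ n) ^ 3 := by
          gcongr
          exact sum_range_ternaryCoeff_le_pow hx N 3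
      _ ≤ 1 + x * β ^ 3 := by
          gcongr
          exact sum_nonneg fun n _ => ternaryCoeff_mul_pow_nonneg hx 1 n
      _ ≤ β := hβ

lemma hasSum_ternaryCoeff_mul_pow (hx : 0 ≤ x) (hT : Summable fun n => ternaryCoeff 1 n * x ^ n)
    (r : ℕ) : HasSum (fun n => ternaryCoeff r n * x ^ n) (ternaryTreeSeries x ^ r) := by
  induction r with
  | zero =>
    convert hasSum_single 0 fun n hn => ?_
    · simp [ternaryCoeff]
    · simp [ternaryCoeff, hn]
  | succ r ih =>
    have hnorm : ∀ s, Summable (fun n => ternaryCoeff s n * x ^ n) →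
        Summable fun n => ‖ternaryCoeff s n * x ^ n‖ := fun s hs =>
      hs.congr fun n => (Real.norm_of_nonneg (ternaryCoeff_mul_pow_nonneg hx s n)).symm
    have hprod := tsum_mul_tsum_eq_tsum_sum_antidiagonal_of_summable_norm (hnorm 1 hT)
      (hnorm r ih.summable)
    have hsum := (summable_norm_sum_mul_antidiagonal_of_summable_norm (hnorm 1 hT)
      (hnorm r ih.summable)).of_norm
    simp_rw [sum_antidiagonal_ternaryCoeff_mul_pow, add_comm 1 r] at hprod hsum
    rw [← ternaryTreeSeries, ih.tsum_eq] at hprod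
    rw [pow_succ', hprod]
    exact hsum.hasSum

lemma ternaryTreeSeries_eq_one_add_mul_pow_three (hx : 0 ≤ x)
    (hT : Summable fun n => ternaryCoeff 1 n * x ^ n) :
    ternaryTreeSeries x = 1 + x * ternaryTreeSeries x ^ 3 := by
  have hshift : HasSum (fun n => ternaryCoeff 1 (n + 1) * x ^ (n + 1))
      (x * ternaryTreeSeries x ^ 3) :=
    ((hasSum_ternaryCoeff_mul_pow hx hT 3).mul_left x).congr_fun fun n => by
      rw [ternaryCoeff_one_succ, pow_succ]
      ring
  have h := (hshift.zero_add (f := fun n => ternaryCoeff 1 n * x ^ n)).tsum_eq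
  rwa [ternaryCoeff_zero_right, pow_zero, mul_one] at h

lemma hasSum_C_mul_pow (hx : 0 ≤ x) (hT : Summable fun n => ternaryCoeff 1 n * x ^ n) :
    HasSum (fun k => C k * x ^ k)
      (1 + x * (3 * ternaryTreeSeries x - ternaryTreeSeries x ^ 2)) := by
  have hshift : HasSum (fun n => C (n + 1) * x ^ (n + 1))
      (3 * x * ternaryTreeSeries x ^ 1 - x * ternaryTreeSeries x ^ 2) :=
    (((hasSum_ternaryCoeff_mul_pow hx hT 1).mul_left (3 * x)).sub
      ((hasSum_ternaryCoeff_mul_pow hx hT 2).mul_left x)).congr_fun fun n => by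
        rw [C_succ, pow_succ]
        ring
  convert hshift.zero_add (f := fun k => C k * x ^ k) using 1
  simp only [C, ↓reduceIte, pow_zero]
  ring

end

lemma eq_three_halves_of_eq_one_add_mul_pow_three {t : ℝ} (ht : 0 ≤ t)
    (h : t = 1 + 4 / 27 * t ^ 3) : t = 3 / 2 := by
  have hroot : (2 * t - 3) ^ 2 * (t + 3) = 0 := by linear_combination (-27) * h
  have : 2 * t - 3 = 0 := by simpa [(by positivity : t + 3 ≠ 0)] using hroot
  linarith

/-- `Σ_{k≥0} C_k (4/27)^k` converges and equals `4/3`. -/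
theorem hasSum_C_at_radius :
    HasSum (fun k : ℕ => C k * (4 / 27) ^ k) (4 / 3) := by
  have hx : (0 : ℝ) ≤ 4 / 27 := by norm_num
  have hT : Summable fun n => ternaryCoeff 1 n * (4 / 27 : ℝ) ^ n :=
    summable_of_sum_range_le (ternaryCoeff_mul_pow_nonneg hx 1)
      (sum_range_ternaryCoeff_one_le hx (β := 3 / 2) (by norm_num) (by norm_num))
  have hT_eq : ternaryTreeSeries (4 / 27) = 3 / 2 :=
    eq_three_halves_of_eq_one_add_mul_pow_three
      (tsum_nonneg (ternaryCoeff_mul_pow_nonneg hx 1))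
      (ternaryTreeSeries_eq_one_add_mul_pow_three hx hT)
  convert hasSum_C_mul_pow hx hT using 1
  rw [hT_eq]
  norm_num
end

section
/- With C_0 = 1 and C_k = 2·(3k−3)!/(k!·(2k−1)!) for k ≥ 1, the sum Σ_{k≥0} k·C_k·(4/27)^k converges and equals 4/9. -/
/-!
Consider the random walk on `ℤ` with steps `+2` (probability `1/3`) and `-1` (probability `2/3`).
By the hitting time theorem, the probability that it first reaches `0` from height `m` after exactly
`j` up-steps is `m / (3j + m) * binom(3j + m, j) (1/3)^j (2/3)^(2j + m)`, and for `m = 1` this is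
`(9/4) (j + 1) C_{j+1} (4/27)^(j+1)`. So the series is `4/9` times the probability that the walk
started at `1` ever reaches `0`. The walk has mean zero, so it is recurrent; concretely, the hitting
probabilities `h m` are bounded and satisfy `h (m + 1) = (2/3) h m + (1/3) h (m + 3)`, whose bounded
solutions are constant, and `h 0 = 1`.
-/

open Nat Finset Filter

/-- The hitting time formula with `m / (3j + m)` cancelled into the factorials. It reads `0 / 0`
at `m = j = 0`, so the row `m = 0`, a walk that has already arrived, is given separately. -/
noncomputable def firstPassage : ℕ → ℕ → ℝ
  | 0, j => if j = 0 then 1 else 0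
  | m + 1, j => (m + 1 : ℕ) * (3 * j + m)! / (j ! * (2 * j + m + 1)!) *
      (1 / 3) ^ j * (2 / 3) ^ (2 * j + m + 1)

lemma firstPassage_nonneg (m j : ℕ) : 0 ≤ firstPassage m j := by
  cases m <;> unfold firstPassage <;> positivity

lemma firstPassage_succ_zero (m : ℕ) : firstPassage (m + 1) 0 = 2 / 3 * firstPassage m 0 := by
  cases m with
  | zero => simp [firstPassage]
  | succ m =>
    simp only [firstPassage, mul_zero, zero_add, factorial_succ, pow_succ]
    push_cast
    field_simp

lemma firstPassage_succ_succ (m j : ℕ) :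
    firstPassage (m + 1) (j + 1) =
      2 / 3 * firstPassage m (j + 1) + 1 / 3 * firstPassage (m + 3) j := by
  cases m <;>
  · simp only [firstPassage, mul_add_one, ← add_assoc, add_right_comm _ 3, add_right_comm _ 2,
      factorial_succ, pow_succ]
    push_cast
    field_simp
    ring

lemma sum_range_succ_firstPassage_succ (m J : ℕ) :
    ∑ j ∈ range (J + 1), firstPassage (m + 1) j =
      2 / 3 * ∑ j ∈ range (J + 1), firstPassage m j +
        1 / 3 * ∑ j ∈ range J, firstPassage (m + 3) j := by
  simp only [sum_range_succ', firstPassage_succ_succ, firstPassage_succ_zero, sum_add_distrib,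
    ← mul_sum]
  ring

lemma sum_range_firstPassage_le_one (J m : ℕ) : ∑ j ∈ range J, firstPassage m j ≤ 1 := by
  induction J generalizing m with
  | zero => simp
  | succ J ihJ =>
    induction m with
    | zero => simp [firstPassage]
    | succ m ihm =>
      rw [sum_range_succ_firstPassage_succ]
      linarith [ihJ (m + 3)]

lemma summable_firstPassage (m : ℕ) : Summable (firstPassage m) :=
  summable_of_sum_range_le (firstPassage_nonneg m) (sum_range_firstPassage_le_one · m)

lemma eq_zero_of_forall_nat_mul_abs_le {x K : ℝ} (h : ∀ n : ℕ, n * |x| ≤ K) : x = 0 := by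
  by_contra hx
  obtain ⟨n, hn⟩ := exists_nat_gt (K / |x|)
  rw [div_lt_iff₀ (abs_pos.2 hx)] at hn
  linarith [h n]

section BoundedRecurrence

variable {u : ℕ → ℝ} {M : ℝ}

lemma eq_apply_zero_of_bounded_of_rec₂ (hM : ∀ n, |u n| ≤ M)
    (hu : ∀ n, u (n + 2) + u (n + 1) = 2 * u n) (n : ℕ) : u n = u 0 := by
  have hgeom (n : ℕ) : u (n + 1) - u n = (-2) ^ n * (u 1 - u 0) := by
    induction n with
    | zero => simp
    | succ n ih => rw [pow_succ]; linarith [hu n]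
  have hstep : u 1 - u 0 = 0 := eq_zero_of_forall_nat_mul_abs_le (K := 2 * M) fun N => by
    calc (N : ℝ) * |u 1 - u 0| ≤ 2 ^ N * |u 1 - u 0| := by
          gcongr; exact_mod_cast Nat.lt_two_pow_self.le
      _ = |u (N + 1) - u N| := by rw [hgeom N, abs_mul, abs_pow, abs_neg, abs_two]
      _ ≤ 2 * M := (abs_sub _ _).trans (by linarith [hM (N + 1), hM N])
  induction n with
  | zero => rfl
  | succ n ih => linarith [hgeom n, show (-2 : ℝ) ^ n * (u 1 - u 0) = 0 by rw [hstep, mul_zero]]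

lemma rec₂_of_bounded_of_rec₃ (hM : ∀ n, |u n| ≤ M)
    (hu : ∀ n, u (n + 3) = 3 * u (n + 1) - 2 * u n) (n : ℕ) :
    u (n + 2) + u (n + 1) = 2 * u n := by
  set c := u 2 + u 1 - 2 * u 0
  have hc (n : ℕ) : u (n + 2) + u (n + 1) - 2 * u n = c := by
    induction n with
    | zero => rfl
    | succ n ih => rw [← ih, hu]; ring
  have hlin (N : ℕ) : u (N + 1) + 2 * u N - u 1 - 2 * u 0 = N * c := by
    induction N with
    | zero => simp
    | succ N ih => push_cast; linarith [hc N]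
  have hc_zero : c = 0 := eq_zero_of_forall_nat_mul_abs_le (K := 6 * M) fun N => by
    rw [← Nat.abs_cast N, ← abs_mul, ← hlin N]
    have := abs_le.1 (hM (N + 1)); have := abs_le.1 (hM N)
    have := abs_le.1 (hM 1); have := abs_le.1 (hM 0)
    rw [abs_le]; constructor <;> linarith
  linarith [hc n]

/-- The characteristic polynomial is `X³ - 3X + 2 = (X - 1)²(X + 2)`: the double root `1` allows
linear growth and the root `-2` geometric growth, and boundedness excludes both. -/
lemma eq_apply_zero_of_bounded_of_rec₃ (hM : ∀ n, |u n| ≤ M)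
    (hu : ∀ n, u (n + 3) = 3 * u (n + 1) - 2 * u n) (n : ℕ) : u n = u 0 :=
  eq_apply_zero_of_bounded_of_rec₂ hM (rec₂_of_bounded_of_rec₃ hM hu) n

end BoundedRecurrence

lemma hasSum_firstPassage_one : HasSum (firstPassage 1) 1 := by
  set h := fun m => ∑' j, firstPassage m j
  have hasSum_h (m : ℕ) : HasSum (firstPassage m) (h m) := (summable_firstPassage m).hasSum
  have h_zero : h 0 = 1 := by simp [h, firstPassage]
  have h_bound (m : ℕ) : |h m| ≤ 1 := by
    rw [abs_of_nonneg (tsum_nonneg (firstPassage_nonneg m))]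
    exact Real.tsum_le_of_sum_range_le (firstPassage_nonneg m) (sum_range_firstPassage_le_one · m)
  have h_rec (m : ℕ) : h (m + 3) = 3 * h (m + 1) - 2 * h m := by
    have lim (m : ℕ) := (hasSum_h m).tendsto_sum_nat
    have : h (m + 1) = 2 / 3 * h m + 1 / 3 * h (m + 3) := by
      refine tendsto_nhds_unique ((tendsto_add_atTop_iff_nat 1).2 (lim (m + 1))) ?_
      simp only [sum_range_succ_firstPassage_succ]
      exact (((tendsto_add_atTop_iff_nat 1).2 (lim m)).const_mul _).add
        ((lim (m + 3)).const_mul _)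
    linarith
  simpa [eq_apply_zero_of_bounded_of_rec₃ h_bound h_rec 1, h_zero] using hasSum_h 1

lemma succ_mul_C_succ (j : ℕ) :
    ((j + 1 : ℕ) : ℝ) * C (j + 1) * (4 / 27) ^ (j + 1) = 4 / 9 * firstPassage 1 j := by
  have h3 : 3 * (j + 1) - 3 = 3 * j := by omega
  have h2 : 2 * (j + 1) - 1 = 2 * j + 1 := by omega
  rw [show (4 / 27 : ℝ) = 1 / 3 * (4 / 9) by norm_num, mul_pow]
  simp only [C, firstPassage, add_eq_zero, one_ne_zero, and_false, if_false, h3, h2, add_zero,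
    factorial_succ, pow_succ, pow_mul]
  push_cast
  field_simp
  ring

/-- `Σ_{k≥0} k · C_k · (4/27)^k` converges and equals `4/9`. -/
theorem hasSum_k_C_at_radius :
    HasSum (fun k : ℕ => (k : ℝ) * C k * (4 / 27) ^ k) (4 / 9) := by
  rw [← hasSum_nat_add_iff' 1]
  simp only [succ_mul_C_succ]
  simpa using hasSum_firstPassage_one.mul_left (4 / 9)
end
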